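/- A lower prevision P on G(X^N) is coherent and exchangeable (i.e., P = P_D for some coherent and exchangeable set D of gambles on X^N, where P_D(f) := sup{μ ∈ ℝ : f − μ ∈ D}) if and only if there is a coherent lower prevision Q on G(N^N_X) (i.e., Q = P_{D_c} for some coherent set D_c of gambles on N^N_X) such that P = Q ∘ Hy^N. In that case Q is uniquely determined by Q(g) = P(g ∘ T^N) for all gambles g on N^N_X. -/

import Mathlib

variable {X : Type*} [Fintype X] [DecidableEq X] [Nonempty X]

/-- `ex^N(f)`: the uniform average of all permuted versions `π^t f` of `f`,
where `(π^t f)(x) = f(x ∘ π)`. -/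
noncomputable def exg {X : Type*} (N : ℕ) (f : (Fin N → X) → ℝ) : (Fin N → X) → ℝ :=
  fun x => (∑ π : Equiv.Perm (Fin N), f (x ∘ π)) / (N.factorial : ℝ)

/-- `W_{A_N}`: the linear span of the gambles `f - π^t f`, which is the kernel of
the projection operator `ex^N`. -/
def WA (X : Type*) (N : ℕ) : Set ((Fin N → X) → ℝ) := {f | exg N f = 0}

/-- A coherent set of desirable gambles on a set of possibilities `Y`. -/
def Coherent {Y : Type*} (D : Set (Y → ℝ)) : Prop :=
  (0 : Y → ℝ) ∉ D ∧ (∀ f : Y → ℝ, 0 ≤ f → f ≠ 0 → f ∈ D) ∧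
  (∀ f ∈ D, ∀ c : ℝ, 0 < c → c • f ∈ D) ∧ ∀ f ∈ D, ∀ g ∈ D, f + g ∈ D

/-- A set of desirable gambles on `X^N` is exchangeable if `W_{A_N} + D ⊆ D`. -/
def Exchangeable (X : Type*) (N : ℕ) (D : Set ((Fin N → X) → ℝ)) : Prop :=
  ∀ f ∈ WA X N, ∀ g ∈ D, f + g ∈ D

/-- The counting map: `countVec x z` is the number of indices `k` with `x k = z`. -/
def countVec {X : Type*} [Fintype X] [DecidableEq X] {n : ℕ} (x : Fin n → X) : X → ℕ :=
  fun z => (Finset.univ.filter fun k => x k = z).card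

lemma sum_countVec {X : Type*} [Fintype X] [DecidableEq X] {n : ℕ} (x : Fin n → X) :
    ∑ z, countVec x z = n := by
  classical
  have h := Finset.card_eq_sum_card_fiberwise
    (s := (Finset.univ : Finset (Fin n))) (t := (Finset.univ : Finset X))
    (f := x) (fun a _ => Finset.mem_univ _)
  simpa [countVec, Finset.card_fin] using h.symm

/-- `N^N_X`: the set of count vectors, i.e. maps `m : X → ℕ` with `∑ m = N`. -/
abbrev CV (X : Type*) [Fintype X] (N : ℕ) := {m : X → ℕ // ∑ z, m z = N}

/-- The counting map `T^N : X^N → N^N_X`. -/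
def Tmap {X : Type*} [Fintype X] [DecidableEq X] {N : ℕ} (x : Fin N → X) : CV X N :=
  ⟨countVec x, sum_countVec x⟩

/-- `Hy^N(f)`: the count gamble `m ↦ (1/|[m]|) ∑_{y ∈ [m]} f(y)`, where
`[m]` is the set of sequences with count vector `m`. -/
noncomputable def hy {X : Type*} [Fintype X] [DecidableEq X] {N : ℕ}
    (f : (Fin N → X) → ℝ) : CV X N → ℝ :=
  fun m => (∑ y ∈ Finset.univ.filter (fun x : Fin N → X => Tmap x = m), f y) /
    ((Finset.univ.filter (fun x : Fin N → X => Tmap x = m)).card : ℝ)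

/-- The lower prevision associated with a set `A` of gambles:
`P_A(f) = sup {μ : f - μ ∈ A}`. -/
noncomputable def lpr {Y : Type*} (A : Set (Y → ℝ)) (f : Y → ℝ) : ℝ :=
  sSup {μ : ℝ | (f - fun _ => μ) ∈ A}

/-!
`Hy^N` is a linear map that fixes constants, sends nonzero nonnegative gambles to nonzero
nonnegative ones, and is a left inverse of `g ↦ g ∘ T^N`. Since `ex^N f` is invariant under
permutations, it is constant on the atoms `[m]` (which are the permutation orbits), and `Hy^N`
does not see permutations; hence `ex^N f = Hy^N f ∘ T^N` and `W_{A_N}` is the kernel of `Hy^N`.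
So an exchangeable `D` is the preimage under `Hy^N` of `D_c := {g | g ∘ T^N ∈ D}`, and conversely
the preimage under `Hy^N` of a coherent set is coherent and exchangeable. Finally, `lpr` commutes
with preimages under linear maps that fix constants.
-/

section

variable {Y Z : Type*}

theorem Coherent.preimage {D : Set (Z → ℝ)} (hD : Coherent D) (L : (Y → ℝ) →ₗ[ℝ] (Z → ℝ))
    (hL : ∀ f, 0 ≤ f → f ≠ 0 → 0 ≤ L f ∧ L f ≠ 0) : Coherent (L ⁻¹' D) := by
  obtain ⟨hD0, hDpos, hDsmul, hDadd⟩ := hD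
  refine ⟨by simpa using hD0, fun f hf hf0 => hDpos _ (hL f hf hf0).1 (hL f hf hf0).2,
    fun f hf c hc => ?_, fun f hf g hg => ?_⟩
  · simpa using hDsmul _ hf c hc
  · simpa using hDadd _ hf _ hg

theorem Coherent.preimage_comp {D : Set (Z → ℝ)} (hD : Coherent D) {φ : Z → Y}
    (hφ : Function.Surjective φ) : Coherent ((· ∘ φ) ⁻¹' D) :=
  hD.preimage (LinearMap.funLeft ℝ ℝ φ) fun _ hf hf0 =>
    ⟨fun _ => hf _, fun h => hf0 (hφ.injective_comp_right h)⟩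

theorem lpr_preimage (L : (Y → ℝ) →ₗ[ℝ] (Z → ℝ)) (hL : ∀ μ : ℝ, L (fun _ => μ) = fun _ => μ)
    (A : Set (Z → ℝ)) (f : Y → ℝ) : lpr (L ⁻¹' A) f = lpr A (L f) := by
  simp only [lpr, Set.mem_preimage, map_sub, hL]

end

open Finset

theorem exg_comp_perm {X : Type*} {N : ℕ} (f : (Fin N → X) → ℝ) (x : Fin N → X)
    (σ : Equiv.Perm (Fin N)) : exg N f (x ∘ σ) = exg N f x :=
  congrArg (· / _) (Equiv.sum_comp (Equiv.mulLeft σ) fun π => f (x ∘ π))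

section

variable {X : Type*} [Fintype X] [DecidableEq X] {N : ℕ}

theorem countVec_eq_card (x : Fin N → X) (z : X) :
    countVec x z = Fintype.card {k // x k = z} := by
  simp [countVec, Fintype.card_subtype]

theorem Tmap_surjective : Function.Surjective (Tmap : (Fin N → X) → CV X N) := by
  intro m
  let e : Fin N ≃ Σ z : X, Fin (m.1 z) := (Fintype.equivFinOfCardEq (by simp [m.2])).symm
  refine ⟨fun k => (e k).1, Subtype.ext (funext fun z => ?_)⟩
  change countVec _ z = m.1 z
  rw [countVec_eq_card, Fintype.card_congr ((e.subtypeEquiv fun _ => Iff.rfl).trans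
    (Equiv.sigmaSubtype z)), Fintype.card_fin]

theorem Tmap_comp_perm (x : Fin N → X) (π : Equiv.Perm (Fin N)) : Tmap (x ∘ π) = Tmap x := by
  refine Subtype.ext (funext fun z => ?_)
  simp only [Tmap, countVec_eq_card]
  exact Fintype.card_congr (π.subtypeEquiv fun _ => Iff.rfl)

theorem exists_perm_of_Tmap_eq {x y : Fin N → X} (h : Tmap x = Tmap y) :
    ∃ π : Equiv.Perm (Fin N), y = x ∘ π := by
  have hcard (z : X) : Fintype.card {k // y k = z} = Fintype.card {k // x k = z} := by
    rw [← countVec_eq_card, ← countVec_eq_card]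
    exact congrFun (congrArg Subtype.val h.symm) z
  let π := Equiv.ofFiberEquiv fun z => Fintype.equivOfCardEq (hcard z)
  exact ⟨π, funext fun k => (Equiv.ofFiberEquiv_map _ k).symm⟩

theorem hy_eq_of_forall_Tmap_eq {f : (Fin N → X) → ℝ} {m : CV X N} {c : ℝ}
    (h : ∀ y, Tmap y = m → f y = c) : hy f m = c := by
  obtain ⟨x, hx⟩ := Tmap_surjective m
  have hcard : (#{y | Tmap y = m} : ℝ) ≠ 0 := by
    exact_mod_cast (card_pos.2 ⟨x, by simp [hx]⟩).ne'
  rw [hy, sum_congr rfl fun y hym => h y (mem_filter.1 hym).2, sum_const,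
    nsmul_eq_mul, mul_div_cancel_left₀ _ hcard]

theorem hy_comp_Tmap (g : CV X N → ℝ) : hy (g ∘ Tmap) = g :=
  funext fun _ => hy_eq_of_forall_Tmap_eq fun _ hym => congrArg g hym

theorem hy_const (μ : ℝ) : hy (fun _ : Fin N → X => μ) = fun _ => μ :=
  hy_comp_Tmap fun _ => μ

noncomputable def hyLinearMap : ((Fin N → X) → ℝ) →ₗ[ℝ] (CV X N → ℝ) where
  toFun := hy
  map_add' f g := funext fun m => by simp only [hy, Pi.add_apply, sum_add_distrib, add_div]
  map_smul' c f := funext fun m => by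
    simp only [hy, Pi.smul_apply, smul_eq_mul, ← mul_sum, mul_div_assoc, RingHom.id_apply]

@[simp]
theorem hyLinearMap_apply (f : (Fin N → X) → ℝ) : hyLinearMap f = hy f := rfl

theorem hy_nonneg {f : (Fin N → X) → ℝ} (hf : 0 ≤ f) : 0 ≤ hy f :=
  fun _ => div_nonneg (sum_nonneg fun y _ => hf y) (Nat.cast_nonneg _)

theorem hy_ne_zero {f : (Fin N → X) → ℝ} (hf : 0 ≤ f) (hf0 : f ≠ 0) : hy f ≠ 0 := by
  obtain ⟨x, hx⟩ := Function.ne_iff.1 hf0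
  have hx_mem : x ∈ ({y | Tmap y = Tmap x} : Finset (Fin N → X)) := by simp
  refine Function.ne_iff.2 ⟨Tmap x, (div_pos ?_ ?_).ne'⟩
  · exact sum_pos' (fun y _ => hf y) ⟨x, hx_mem, (hf x).lt_of_ne' hx⟩
  · exact_mod_cast card_pos.2 ⟨x, hx_mem⟩

theorem hy_comp_perm (f : (Fin N → X) → ℝ) (π : Equiv.Perm (Fin N)) :
    hy (fun x => f (x ∘ π)) = hy f := by
  funext m
  simp only [hy]
  congr 1
  exact sum_nbij' (· ∘ π) (· ∘ π.symm) (by simp [Tmap_comp_perm])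
    (by simp [Tmap_comp_perm]) (by simp [Function.comp_assoc]) (by simp [Function.comp_assoc])
    fun _ _ => rfl

theorem hy_exg (f : (Fin N → X) → ℝ) : hy (exg N f) = hy f := by
  have hexg : exg N f = (N.factorial : ℝ)⁻¹ • ∑ π : Equiv.Perm (Fin N), fun x => f (x ∘ π) := by
    funext x
    simp [exg, Finset.sum_apply, div_eq_inv_mul]
  rw [hexg, ← hyLinearMap_apply, map_smul, map_sum]
  simp only [hyLinearMap_apply, hy_comp_perm, sum_const, card_univ, Fintype.card_perm,
    Fintype.card_fin]
  rw [← Nat.cast_smul_eq_nsmul ℝ, smul_smul, inv_mul_cancel₀ (by positivity), one_smul]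

theorem exg_eq_hy_comp_Tmap (f : (Fin N → X) → ℝ) : exg N f = hy f ∘ Tmap := by
  funext x
  rw [Function.comp_apply, ← hy_exg]
  refine (hy_eq_of_forall_Tmap_eq fun y hym => ?_).symm
  obtain ⟨π, rfl⟩ := exists_perm_of_Tmap_eq hym.symm
  exact exg_comp_perm f x π

theorem mem_WA_iff {f : (Fin N → X) → ℝ} : f ∈ WA X N ↔ hy f = 0 := by
  rw [WA, Set.mem_ofPred_eq, exg_eq_hy_comp_Tmap]
  exact Tmap_surjective.injective_comp_right.eq_iff' rfl

theorem sub_mem_WA_iff {f g : (Fin N → X) → ℝ} : f - g ∈ WA X N ↔ hy f = hy g := by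
  rw [mem_WA_iff, ← hyLinearMap_apply, map_sub, sub_eq_zero]
  rfl

theorem Exchangeable.mem_iff {D : Set ((Fin N → X) → ℝ)} (hD : Exchangeable X N D)
    {f : (Fin N → X) → ℝ} : f ∈ D ↔ hy f ∘ Tmap ∈ D := by
  refine ⟨fun hf => ?_, fun hf => ?_⟩
  · simpa using hD _ (sub_mem_WA_iff.2 (hy_comp_Tmap (hy f))) f hf
  · simpa using hD _ (sub_mem_WA_iff.2 (hy_comp_Tmap (hy f)).symm) _ hf

theorem exchangeable_preimage_hy (Dc : Set (CV X N → ℝ)) : Exchangeable X N (hy ⁻¹' Dc) := by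
  intro f hf g hg
  rw [Set.mem_preimage, ← hyLinearMap_apply, map_add, hyLinearMap_apply, mem_WA_iff.1 hf,
    zero_add]
  exact hg

theorem Coherent.preimage_hy {Dc : Set (CV X N → ℝ)} (hDc : Coherent Dc) :
    Coherent (hy ⁻¹' Dc : Set ((Fin N → X) → ℝ)) :=
  hDc.preimage hyLinearMap fun _ hf hf0 => ⟨hy_nonneg hf, hy_ne_zero hf hf0⟩

theorem lpr_preimage_hy (Dc : Set (CV X N → ℝ)) (f : (Fin N → X) → ℝ) :
    lpr (hy ⁻¹' Dc) f = lpr Dc (hy f) :=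
  lpr_preimage hyLinearMap hy_const Dc f

theorem Exchangeable.lpr_eq {D : Set ((Fin N → X) → ℝ)} (hD : Exchangeable X N D)
    (f : (Fin N → X) → ℝ) : lpr D f = lpr ((· ∘ Tmap) ⁻¹' D) (hy f) := by
  rw [← lpr_preimage_hy]
  congr 1
  ext g
  exact hD.mem_iff

end

theorem finite_representation_lower_previsions_general {N : ℕ}
    (P : ((Fin N → X) → ℝ) → ℝ) :
    ((∃ D : Set ((Fin N → X) → ℝ), Coherent D ∧ Exchangeable X N D ∧ P = lpr D) ↔
      ∃ Q : (CV X N → ℝ) → ℝ,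
        (∃ Dc : Set (CV X N → ℝ), Coherent Dc ∧ Q = lpr Dc) ∧
        P = fun f => Q (hy f)) ∧
    ∀ Q : (CV X N → ℝ) → ℝ,
      (∃ Dc : Set (CV X N → ℝ), Coherent Dc ∧ Q = lpr Dc) →
      P = (fun f => Q (hy f)) →
      Q = fun g => P (g ∘ Tmap) := by
  refine ⟨⟨?_, ?_⟩, ?_⟩
  · rintro ⟨D, hD, hDex, rfl⟩
    exact ⟨_, ⟨_, hD.preimage_comp Tmap_surjective, rfl⟩, funext hDex.lpr_eq⟩
  · rintro ⟨_, ⟨Dc, hDc, rfl⟩, rfl⟩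
    exact ⟨_, hDc.preimage_hy, exchangeable_preimage_hy Dc,
      funext fun f => (lpr_preimage_hy Dc f).symm⟩
  · rintro Q - rfl
    exact funext fun g => congrArg Q (hy_comp_Tmap g).symm

theorem finite_representation_lower_previsions {N : ℕ} (hN : 1 ≤ N)
    (P : ((Fin N → X) → ℝ) → ℝ) :
    ((∃ D : Set ((Fin N → X) → ℝ), Coherent D ∧ Exchangeable X N D ∧ P = lpr D) ↔
      ∃ Q : (CV X N → ℝ) → ℝ,
        (∃ Dc : Set (CV X N → ℝ), Coherent Dc ∧ Q = lpr Dc) ∧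
        P = fun f => Q (hy f)) ∧
    ∀ Q : (CV X N → ℝ) → ℝ,
      (∃ Dc : Set (CV X N → ℝ), Coherent Dc ∧ Q = lpr Dc) →
      P = (fun f => Q (hy f)) →
      Q = fun g => P (g ∘ Tmap) :=
  finite_representation_lower_previsions_general P
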